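/- arXiv:2503.14249 — 4 statements merged into one kernel-verified Lean document; each statement's English description precedes it below -/
import Mathlib

section
/- Let G be a locally compact abelian group with Haar measure μ, ω a weight on G, 1 ≤ p < ∞, and f a Borel measurable function with ∫_G |f(s)|^p ω(s) dμ(s) < ∞. Then for every s ∈ G, ω(s⁻¹)^{(1-p)/p} · |||f|||_{ω,p} ≤ |||Θ_ω^s f|||_{ω,p} ≤ ω(s)^{(p-1)/p} · |||f|||_{ω,p}, where |||h|||_{ω,p} = (∫_G |h(t)|^p ω(t) dμ(t))^{1/p}. -/
open MeasureTheory

noncomputable section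

/-- The operator `(Θ_ω^s f)(t) = f(ts) ω(ts) / ω(t)`. -/
def Theta {G : Type*} [Group G] (ω : G → ℝ) (s : G) (f : G → ℂ) : G → ℂ :=
  fun t => f (t * s) * ((ω (t * s) / ω t : ℝ) : ℂ)

/-!
Writing `q(t) = ω(ts)/ω(t)`, the weighted integrand of `Θ_ω^s f` at `t` is
`|f(ts)|^p ω(ts) · q(t)^(p-1)`. Submultiplicativity squeezes `q` between `ω(s⁻¹)⁻¹` and `ω(s)`,
so after the substitution `t ↦ ts` (Haar measure is translation invariant) the `p`-th power of
`|||Θ_ω^s f|||_{ω,p}` lies between `ω(s⁻¹)^(1-p)` and `ω(s)^(p-1)` times that of `|||f|||_{ω,p}`.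
-/

section Weight

variable {G : Type*} [Group G] {ω : G → ℝ}

theorem norm_Theta_rpow_mul (hω_pos : ∀ s, 0 < ω s) (p : ℝ) (f : G → ℂ) (s t : G) :
    ‖Theta ω s f t‖ ^ p * ω t =
      ‖f (t * s)‖ ^ p * ω (t * s) * (ω (t * s) / ω t) ^ (p - 1) := by
  have hq : 0 < ω (t * s) / ω t := div_pos (hω_pos _) (hω_pos t)
  have hnorm : ‖Theta ω s f t‖ = ‖f (t * s)‖ * (ω (t * s) / ω t) := by
    simp [Theta, abs_of_pos (hω_pos _)]
  rw [hnorm, Real.mul_rpow (norm_nonneg _) hq.le, Real.rpow_sub_one hq.ne']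
  field_simp [(hω_pos t).ne', (hω_pos (t * s)).ne']

variable (hω_pos : ∀ s, 0 < ω s) (hω_sub : ∀ s t, ω (s * t) ≤ ω s * ω t)
include hω_pos hω_sub

theorem weight_mul_div_le (s t : G) : ω (t * s) / ω t ≤ ω s := by
  rw [div_le_iff₀ (hω_pos t), mul_comm]
  exact hω_sub t s

theorem inv_weight_inv_le_weight_mul_div (s t : G) : (ω s⁻¹)⁻¹ ≤ ω (t * s) / ω t := by
  rw [le_div_iff₀ (hω_pos t), inv_mul_le_iff₀ (hω_pos _)]
  have h := hω_sub (t * s) s⁻¹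
  rw [mul_inv_cancel_right] at h
  linarith

theorem weight_mul_div_rpow_mem_Icc {r : ℝ} (hr : 0 ≤ r) (s t : G) :
    (ω (t * s) / ω t) ^ r ∈ Set.Icc (ω s⁻¹ ^ (-r)) (ω s ^ r) := by
  have hq : 0 < ω (t * s) / ω t := div_pos (hω_pos _) (hω_pos t)
  refine ⟨?_, Real.rpow_le_rpow hq.le (weight_mul_div_le hω_pos hω_sub s t) hr⟩
  rw [Real.rpow_neg (hω_pos _).le, ← Real.inv_rpow (hω_pos _).le]
  exact Real.rpow_le_rpow (inv_nonneg.2 (hω_pos _).le)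
    (inv_weight_inv_le_weight_mul_div hω_pos hω_sub s t) hr

end Weight

theorem integral_mul_mem_Icc {α : Type*} [MeasurableSpace α] {μ : Measure α} {g q : α → ℝ}
    (hg : Integrable g μ) (hg_nonneg : ∀ x, 0 ≤ g x) (hq : AEStronglyMeasurable q μ)
    {a b : ℝ} (hqab : ∀ x, q x ∈ Set.Icc a b) :
    ∫ x, g x * q x ∂μ ∈ Set.Icc (a * ∫ x, g x ∂μ) (b * ∫ x, g x ∂μ) := by
  have hgq : Integrable (fun x => g x * q x) μ :=
    hg.mul_bdd hq (.of_forall fun x => abs_le_max_abs_abs (hqab x).1 (hqab x).2)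
  rw [← integral_const_mul, ← integral_const_mul]
  refine ⟨integral_mono (hg.const_mul a) hgq fun x => ?_,
    integral_mono hgq (hg.const_mul b) fun x => ?_⟩
  · rw [mul_comm]; exact mul_le_mul_of_nonneg_left (hqab x).1 (hg_nonneg x)
  · rw [mul_comm b]; exact mul_le_mul_of_nonneg_left (hqab x).2 (hg_nonneg x)

theorem Real.rpow_mul_rpow_one_div {c I : ℝ} (hc : 0 ≤ c) (hI : 0 ≤ I) (r p : ℝ) :
    (c ^ r * I) ^ (1 / p) = c ^ (r / p) * I ^ (1 / p) := by
  rw [Real.mul_rpow (Real.rpow_nonneg hc _) hI, ← Real.rpow_mul hc, mul_one_div]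

theorem theta_norm_estimates_general
    {G : Type*} [CommGroup G] [TopologicalSpace G] [IsTopologicalGroup G]
    [MeasurableSpace G] [BorelSpace G]
    (μ : Measure G) [μ.IsHaarMeasure]
    (ω : G → ℝ) (hω_meas : Measurable ω) (hω_pos : ∀ s : G, 0 < ω s)
    (hω_sub : ∀ s t : G, ω (s * t) ≤ ω s * ω t)
    (p : ℝ) (hp : 1 ≤ p)
    (f : G → ℂ)
    (hf : Integrable (fun t => ‖f t‖ ^ p * ω t) μ) (s : G) :
    ω s⁻¹ ^ ((1 - p) / p) * (∫ t, ‖f t‖ ^ p * ω t ∂μ) ^ (1 / p) ≤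
        (∫ t, ‖Theta ω s f t‖ ^ p * ω t ∂μ) ^ (1 / p) ∧
    (∫ t, ‖Theta ω s f t‖ ^ p * ω t ∂μ) ^ (1 / p) ≤
        ω s ^ ((p - 1) / p) * (∫ t, ‖f t‖ ^ p * ω t ∂μ) ^ (1 / p) := by
  set g : G → ℝ := fun t => ‖f t‖ ^ p * ω t
  have hg_nonneg : ∀ t, 0 ≤ g t := fun t => by positivity [hω_pos t]
  have hI : 0 ≤ ∫ t, g t ∂μ := integral_nonneg hg_nonneg
  have hbounds := integral_mul_mem_Icc (hf.comp_mul_right s) (fun t => hg_nonneg (t * s))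
    (by fun_prop : Measurable fun t => (ω (t * s) / ω t) ^ (p - 1)).aestronglyMeasurable
    (weight_mul_div_rpow_mem_Icc hω_pos hω_sub (sub_nonneg.2 hp) s)
  have hΘ : ∫ t, ‖Theta ω s f t‖ ^ p * ω t ∂μ =
      ∫ t, g (t * s) * (ω (t * s) / ω t) ^ (p - 1) ∂μ :=
    integral_congr_ae (.of_forall (norm_Theta_rpow_mul hω_pos p f s))
  rw [integral_mul_right_eq_self g s, neg_sub, ← hΘ] at hbounds
  have hp' : 0 ≤ 1 / p := by positivity
  constructor
  · rw [← Real.rpow_mul_rpow_one_div (hω_pos _).le hI]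
    exact Real.rpow_le_rpow (by positivity [hω_pos s⁻¹]) hbounds.1 hp'
  · rw [← Real.rpow_mul_rpow_one_div (hω_pos _).le hI]
    exact Real.rpow_le_rpow (integral_nonneg fun t => by positivity [hω_pos t]) hbounds.2 hp'

/-- Norm estimates for `Θ_ω^s` on `L^p(G,ω)`:
`ω(s⁻¹)^((1-p)/p) |||f|||_{ω,p} ≤ |||Θ_ω^s f|||_{ω,p} ≤ ω(s)^((p-1)/p) |||f|||_{ω,p}`. -/
theorem theta_norm_estimates
    {G : Type*} [CommGroup G] [TopologicalSpace G] [IsTopologicalGroup G]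
    [LocallyCompactSpace G] [MeasurableSpace G] [BorelSpace G]
    (μ : Measure G) [μ.IsHaarMeasure]
    (ω : G → ℝ) (hω_meas : Measurable ω) (hω_pos : ∀ s : G, 0 < ω s)
    (hω_sub : ∀ s t : G, ω (s * t) ≤ ω s * ω t) (hω_one : ω 1 = 1)
    (p : ℝ) (hp : 1 ≤ p)
    (f : G → ℂ) (hf_meas : Measurable f)
    (hf : Integrable (fun t => ‖f t‖ ^ p * ω t) μ) (s : G) :
    ω s⁻¹ ^ ((1 - p) / p) * (∫ t, ‖f t‖ ^ p * ω t ∂μ) ^ (1 / p) ≤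
        (∫ t, ‖Theta ω s f t‖ ^ p * ω t ∂μ) ^ (1 / p) ∧
    (∫ t, ‖Theta ω s f t‖ ^ p * ω t ∂μ) ^ (1 / p) ≤
        ω s ^ ((p - 1) / p) * (∫ t, ‖f t‖ ^ p * ω t ∂μ) ^ (1 / p) :=
  theta_norm_estimates_general μ ω hω_meas hω_pos hω_sub p hp f hf s
end
end

section
/- Let G be a locally compact abelian group with Haar measure μ, ω a symmetric weight on G, and f, g ∈ L¹(G,ω). Then for every s ∈ G and μ-almost every t ∈ G, (g^* ∗_ω Γ_ω^s f)(t) = ((Γ_ω^{s⁻¹} g)^* ∗_ω f)(t), where h^*(r) = conj(h(r⁻¹)) (the modular function of an abelian group being identically 1). -/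
open MeasureTheory

noncomputable section

/-- The weight-dependent convolution
`(f ∗_ω g)(t) = ∫ f(s) g(s⁻¹t) ω(s) ω(s⁻¹t) / ω(t) dμ(s)`. -/
def wConv {G : Type*} [Group G] [MeasurableSpace G] (μ : Measure G) (ω : G → ℝ)
    (f g : G → ℂ) : G → ℂ :=
  fun t => ∫ s, f s * g (s⁻¹ * t) * (((ω s * ω (s⁻¹ * t)) / ω t : ℝ) : ℂ) ∂μ

/-- The operator `(Γ_ω^s f)(t) = f(s⁻¹t) ω(s⁻¹t) / ω(t)`. -/
def Gamma {G : Type*} [Group G] (ω : G → ℝ) (s : G) (f : G → ℂ) : G → ℂ :=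
  fun t => f (s⁻¹ * t) * ((ω (s⁻¹ * t) / ω t : ℝ) : ℂ)

/-- The involution `h^*(r) = conj(h(r⁻¹))` (abelian group, modular function ≡ 1). -/
def invol {G : Type*} [Group G] (h : G → ℂ) : G → ℂ :=
  fun r => (starRingEnd ℂ) (h r⁻¹)

/-! Substituting `r ↦ r s⁻¹` in the left-hand integral (a Haar measure on an abelian group is
right invariant) turns its integrand pointwise into the right-hand one: the weight factors agree
because `ω (r s⁻¹) = ω (s r⁻¹)` and `ω r⁻¹ = ω r` by symmetry of `ω`. -/

section

variable {G : Type*} [Group G] {ω : G → ℝ}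

theorem invol_mul_gamma_mul_right_inv (hω_ne : ∀ s, ω s ≠ 0) (hω_symm : ∀ s, ω s⁻¹ = ω s)
    (f g : G → ℂ) (s r t : G) :
    invol g (r * s⁻¹) * Gamma ω s f ((r * s⁻¹)⁻¹ * t) *
        ((ω (r * s⁻¹) * ω ((r * s⁻¹)⁻¹ * t) / ω t : ℝ) : ℂ) =
      invol (Gamma ω s⁻¹ g) r * f (r⁻¹ * t) * ((ω r * ω (r⁻¹ * t) / ω t : ℝ) : ℂ) := by
  have h_cancel : s⁻¹ * (s * r⁻¹ * t) = r⁻¹ * t := by group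
  have h_symm : ω (r * s⁻¹) = ω (s * r⁻¹) := by rw [← hω_symm, mul_inv_rev, inv_inv]
  simp only [invol, Gamma, mul_inv_rev, inv_inv, h_cancel, h_symm, hω_symm, map_mul,
    Complex.conj_ofReal]
  have hr : (ω r : ℂ) ≠ 0 := by exact_mod_cast hω_ne r
  have hsrt : (ω (s * r⁻¹ * t) : ℂ) ≠ 0 := by exact_mod_cast hω_ne _
  push_cast
  field_simp

theorem wConv_invol_gamma [MeasurableSpace G] [MeasurableMul G] (μ : Measure G)
    [μ.IsMulRightInvariant] (hω_ne : ∀ s, ω s ≠ 0) (hω_symm : ∀ s, ω s⁻¹ = ω s)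
    (f g : G → ℂ) (s t : G) :
    wConv μ ω (invol g) (Gamma ω s f) t = wConv μ ω (invol (Gamma ω s⁻¹ g)) f t := by
  rw [wConv, ← integral_mul_right_eq_self _ s⁻¹]
  simp only [invol_mul_gamma_mul_right_inv hω_ne hω_symm]
  rfl

end

theorem invol_conv_gamma_general
    {G : Type*} [CommGroup G] [TopologicalSpace G] [IsTopologicalGroup G]
    [MeasurableSpace G] [BorelSpace G]
    (μ : Measure G) [μ.IsHaarMeasure]
    (ω : G → ℝ) (hω_pos : ∀ s : G, 0 < ω s)
    (hω_symm : ∀ s : G, ω s⁻¹ = ω s)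
    (f g : G → ℂ) (s : G) :
    ∀ᵐ t ∂μ, wConv μ ω (invol g) (Gamma ω s f) t =
      wConv μ ω (invol (Gamma ω s⁻¹ g)) f t :=
  .of_forall <| wConv_invol_gamma μ (fun s => (hω_pos s).ne') hω_symm f g s

/-- `g^* ∗_ω Γ_ω^s f = (Γ_ω^{s⁻¹} g)^* ∗_ω f` almost everywhere. -/
theorem invol_conv_gamma
    {G : Type*} [CommGroup G] [TopologicalSpace G] [IsTopologicalGroup G]
    [LocallyCompactSpace G] [MeasurableSpace G] [BorelSpace G]
    (μ : Measure G) [μ.IsHaarMeasure]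
    (ω : G → ℝ) (hω_meas : Measurable ω) (hω_pos : ∀ s : G, 0 < ω s)
    (hω_sub : ∀ s t : G, ω (s * t) ≤ ω s * ω t) (hω_one : ω 1 = 1)
    (hω_symm : ∀ s : G, ω s⁻¹ = ω s)
    (f g : G → ℂ) (hf_meas : Measurable f) (hg_meas : Measurable g)
    (hf : Integrable (fun s => f s * (ω s : ℂ)) μ)
    (hg : Integrable (fun s => g s * (ω s : ℂ)) μ) (s : G) :
    ∀ᵐ t ∂μ, wConv μ ω (invol g) (Gamma ω s f) t =
      wConv μ ω (invol (Gamma ω s⁻¹ g)) f t :=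
  invol_conv_gamma_general μ ω hω_pos hω_symm f g s
end
end

section
/- Let G be a locally compact abelian group with Haar measure μ, ω a symmetric weight on G, and f, g ∈ L¹(G,ω). Then for every s ∈ G and μ-almost every t ∈ G, (g^* ∗_ω Θ_ω^s f)(t) = ((Θ_ω^{s⁻¹} g)^* ∗_ω f)(t), where h^*(r) = conj(h(r⁻¹)) (the modular function of an abelian group being identically 1). -/
open MeasureTheory

noncomputable section

/-!
The identity holds for every `t`: the Haar measure of an abelian group is right invariant, and
the substitution `r ↦ r * s⁻¹` turns the integrand of the left-hand convolution into that of the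
right-hand one, the symmetry of `ω` making the weights cancel.
-/

lemma wConv_eq_integral_mul_right {G : Type*} [Group G] [MeasurableSpace G] [MeasurableMul G]
    (μ : Measure G) [μ.IsMulRightInvariant] (ω : G → ℝ) (h k : G → ℂ) (t a : G) :
    wConv μ ω h k t = ∫ r, h (r * a) * k ((r * a)⁻¹ * t) *
      (((ω (r * a) * ω ((r * a)⁻¹ * t)) / ω t : ℝ) : ℂ) ∂μ :=
  (integral_mul_right_eq_self _ a).symm

section
variable {G : Type*} [CommGroup G] {ω : G → ℝ}

lemma invol_theta_inv_apply_mul_inv (hω_symm : ∀ s : G, ω s⁻¹ = ω s) (g : G → ℂ) (s r : G) :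
    invol (Theta ω s⁻¹ g) (r * s⁻¹) = invol g r * ((ω r / ω (r * s⁻¹) : ℝ) : ℂ) := by
  have hr : (r * s⁻¹)⁻¹ * s⁻¹ = r⁻¹ := by
    rw [mul_inv_rev, inv_inv, mul_right_comm, mul_inv_cancel, one_mul]
  have hrs : ω (r * s⁻¹)⁻¹ = ω (r * s⁻¹) := hω_symm _
  simp only [invol, Theta, hr, hrs, hω_symm, map_mul, Complex.conj_ofReal]

lemma wConv_integrand_invol_theta (hω_ne : ∀ x : G, ω x ≠ 0)
    (hω_symm : ∀ s : G, ω s⁻¹ = ω s) (f g : G → ℂ) (s t r : G) :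
    invol g r * Theta ω s f (r⁻¹ * t) * (((ω r * ω (r⁻¹ * t)) / ω t : ℝ) : ℂ) =
      invol (Theta ω s⁻¹ g) (r * s⁻¹) * f ((r * s⁻¹)⁻¹ * t) *
        (((ω (r * s⁻¹) * ω ((r * s⁻¹)⁻¹ * t)) / ω t : ℝ) : ℂ) := by
  have hrt : (r * s⁻¹)⁻¹ * t = r⁻¹ * t * s := by
    rw [mul_inv_rev, inv_inv]; ac_rfl
  have h₁ : (ω (r * s⁻¹) : ℂ) ≠ 0 := Complex.ofReal_ne_zero.2 (hω_ne _)
  have h₂ : (ω (r⁻¹ * t) : ℂ) ≠ 0 := Complex.ofReal_ne_zero.2 (hω_ne _)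
  rw [invol_theta_inv_apply_mul_inv hω_symm, hrt]
  simp only [Theta]
  push_cast
  field_simp

end

theorem invol_conv_theta_general
    {G : Type*} [CommGroup G] [TopologicalSpace G] [IsTopologicalGroup G]
    [MeasurableSpace G] [BorelSpace G]
    (μ : Measure G) [μ.IsHaarMeasure]
    (ω : G → ℝ) (hω_pos : ∀ s : G, 0 < ω s)
    (hω_symm : ∀ s : G, ω s⁻¹ = ω s)
    (f g : G → ℂ) (s : G) :
    ∀ᵐ t ∂μ, wConv μ ω (invol g) (Theta ω s f) t =
      wConv μ ω (invol (Theta ω s⁻¹ g)) f t := by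
  refine Filter.Eventually.of_forall fun t => ?_
  rw [wConv_eq_integral_mul_right μ ω _ f t s⁻¹, wConv]
  congr 1 with r
  exact wConv_integrand_invol_theta (fun x => (hω_pos x).ne') hω_symm f g s t r

/-- `g^* ∗_ω Θ_ω^s f = (Θ_ω^{s⁻¹} g)^* ∗_ω f` almost everywhere. -/
theorem invol_conv_theta
    {G : Type*} [CommGroup G] [TopologicalSpace G] [IsTopologicalGroup G]
    [LocallyCompactSpace G] [MeasurableSpace G] [BorelSpace G]
    (μ : Measure G) [μ.IsHaarMeasure]
    (ω : G → ℝ) (hω_meas : Measurable ω) (hω_pos : ∀ s : G, 0 < ω s)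
    (hω_sub : ∀ s t : G, ω (s * t) ≤ ω s * ω t) (hω_one : ω 1 = 1)
    (hω_symm : ∀ s : G, ω s⁻¹ = ω s)
    (f g : G → ℂ) (hf_meas : Measurable f) (hg_meas : Measurable g)
    (hf : Integrable (fun s => f s * (ω s : ℂ)) μ)
    (hg : Integrable (fun s => g s * (ω s : ℂ)) μ) (s : G) :
    ∀ᵐ t ∂μ, wConv μ ω (invol g) (Theta ω s f) t =
      wConv μ ω (invol (Theta ω s⁻¹ g)) f t :=
  invol_conv_theta_general μ ω hω_pos hω_symm f g s
end
end

section
/- Let G be a locally compact group with left Haar measure μ and modular function Δ, ω a symmetric weight on G, H a complex Hilbert space, π : G → B(H) a unitary representation, f ∈ L¹(G,ω), and s ∈ G. Suppose T, T' ∈ B(H) satisfy ⟨Tξ, η⟩ = ∫_G f(r) ⟨π(r)ξ, η⟩ ω(r) dμ(r) and ⟨T'ξ, η⟩ = ∫_G (Θ_ω^{s⁻¹} f)(r) ⟨π(r)ξ, η⟩ ω(r) dμ(r) for all ξ, η ∈ H. Then T ∘ π(s) = Δ(s⁻¹) · T'. -/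
/-! The substitution `r ↦ r s` scales the left Haar measure by `Δ(s⁻¹)` and, since
`Θ_ω^{s⁻¹} f (r s) ω(r s) = f(r) ω(r)` and `π(r) π(s) = π(r s)`, turns the integrand of
`⟪T π(s) ξ, η⟫` into that of `⟪T' ξ, η⟫`. -/

open MeasureTheory
open scoped ComplexInnerProductSpace

noncomputable section

/- No integrability hypothesis: right translation is a measurable equivalence, so `g` and
`g (· * s)` are integrable together and otherwise both integrals are `0`. -/
theorem integral_mul_right_eq_smul_of_map_eq {G E : Type*} [Group G] [MeasurableSpace G]
    [MeasurableMul G] [NormedAddCommGroup E] [NormedSpace ℝ E] {μ : Measure G} {s : G} {c : ℝ}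
    (hc : 0 ≤ c) (hμ : μ.map (· * s) = ENNReal.ofReal c • μ) (g : G → E) :
    ∫ r, g (r * s) ∂μ = c • ∫ r, g r ∂μ := by
  have hs : MeasurableEmbedding (· * s) := (MeasurableEquiv.mulRight s).measurableEmbedding
  rw [← hs.integral_map, hμ, integral_smul_measure, ENNReal.toReal_ofReal hc]

theorem Theta_inv_mul_right_mul {G : Type*} [Group G] (ω : G → ℝ) (f : G → ℂ) (s r : G)
    (hω : ω (r * s) ≠ 0) :
    Theta ω s⁻¹ f (r * s) * (ω (r * s) : ℂ) = f r * (ω r : ℂ) := by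
  have hω' : (ω (r * s) : ℂ) ≠ 0 := by exact_mod_cast hω
  simp only [Theta, mul_inv_cancel_right, Complex.ofReal_div]
  field_simp

theorem pi_f_comp_pi_s_general
    {G : Type*} [Group G] [TopologicalSpace G] [IsTopologicalGroup G]
    [MeasurableSpace G] [BorelSpace G]
    (μ : Measure G)
    (Δ : G → ℝ) (hΔ_pos : ∀ s : G, 0 < Δ s)
    (hΔ : ∀ s : G, μ.map (fun t => t * s) = ENNReal.ofReal (Δ s⁻¹) • μ)
    (ω : G → ℝ) (hω_pos : ∀ s : G, 0 < ω s)
    {H : Type*} [NormedAddCommGroup H] [InnerProductSpace ℂ H]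
    (π : G → H →L[ℂ] H)
    (hπ_mul : ∀ s t : G, π (s * t) = (π s).comp (π t))
    (f : G → ℂ)
    (s : G) (T T' : H →L[ℂ] H)
    (hT : ∀ ξ η : H, ⟪T ξ, η⟫ = ∫ r, f r * ⟪π r ξ, η⟫ * (ω r : ℂ) ∂μ)
    (hT' : ∀ ξ η : H, ⟪T' ξ, η⟫ = ∫ r, Theta ω s⁻¹ f r * ⟪π r ξ, η⟫ * (ω r : ℂ) ∂μ) :
    T.comp (π s) = ((Δ s⁻¹ : ℝ) : ℂ) • T' := by
  ext ξ
  refine ext_inner_right ℂ fun η => ?_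
  calc ⟪T (π s ξ), η⟫
      = ∫ r, Theta ω s⁻¹ f (r * s) * ⟪π (r * s) ξ, η⟫ * (ω (r * s) : ℂ) ∂μ := by
        refine (hT _ η).trans (integral_congr_ae (.of_forall fun r => ?_))
        beta_reduce
        rw [hπ_mul, ContinuousLinearMap.comp_apply, mul_right_comm _ _ (ω (r * s) : ℂ),
          Theta_inv_mul_right_mul ω f s r (hω_pos _).ne', mul_right_comm]
    _ = Δ s⁻¹ • ⟪T' ξ, η⟫ := by
        rw [hT']
        exact integral_mul_right_eq_smul_of_map_eq (hΔ_pos _).le (hΔ s)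
          fun r => Theta ω s⁻¹ f r * ⟪π r ξ, η⟫ * (ω r : ℂ)
    _ = ⟪(((Δ s⁻¹ : ℝ) : ℂ) • T') ξ, η⟫ := by
        rw [smul_apply, inner_smul_left, Complex.conj_ofReal,
          Complex.real_smul]

/-- `π(f) π(s) = Δ(s⁻¹) π(Θ_ω^{s⁻¹} f)` for the integrated form of a unitary
representation. -/
theorem pi_f_comp_pi_s
    {G : Type*} [Group G] [TopologicalSpace G] [IsTopologicalGroup G]
    [LocallyCompactSpace G] [MeasurableSpace G] [BorelSpace G]
    (μ : Measure G) [μ.IsHaarMeasure]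
    (Δ : G → ℝ) (hΔ_pos : ∀ s : G, 0 < Δ s)
    (hΔ : ∀ s : G, μ.map (fun t => t * s) = ENNReal.ofReal (Δ s⁻¹) • μ)
    (ω : G → ℝ) (hω_meas : Measurable ω) (hω_pos : ∀ s : G, 0 < ω s)
    (hω_sub : ∀ s t : G, ω (s * t) ≤ ω s * ω t) (hω_one : ω 1 = 1)
    (hω_symm : ∀ s : G, ω s⁻¹ = ω s)
    {H : Type*} [NormedAddCommGroup H] [InnerProductSpace ℂ H] [CompleteSpace H]
    (π : G → H →L[ℂ] H)
    (hπ_unitary : ∀ s : G, π s ∈ unitary (H →L[ℂ] H))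
    (hπ_mul : ∀ s t : G, π (s * t) = (π s).comp (π t))
    (hπ_one : π 1 = 1)
    (hπ_cont : ∀ ξ : H, Continuous fun s => π s ξ)
    (f : G → ℂ) (hf_meas : Measurable f)
    (hf : Integrable (fun s => f s * (ω s : ℂ)) μ)
    (s : G) (T T' : H →L[ℂ] H)
    (hT : ∀ ξ η : H, ⟪T ξ, η⟫ = ∫ r, f r * ⟪π r ξ, η⟫ * (ω r : ℂ) ∂μ)
    (hT' : ∀ ξ η : H, ⟪T' ξ, η⟫ = ∫ r, Theta ω s⁻¹ f r * ⟪π r ξ, η⟫ * (ω r : ℂ) ∂μ) :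
    T.comp (π s) = ((Δ s⁻¹ : ℝ) : ℂ) • T' :=
  pi_f_comp_pi_s_general μ Δ hΔ_pos hΔ ω hω_pos π hπ_mul f s T T' hT hT'
end
end
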